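/- Let σ, ρ > 0, N ≥ 1, and let λ_1,…,λ_N be pairwise distinct purely imaginary complex numbers satisfying λ_j = -λ_{N+1-j} for j = 1,…,N. Then the unique minimizer γ ∈ ℂ^N of ‖e^{-·²/(2σ)} - Σ_{j=1}^N γ_j e^{λ_j ·}‖²_{L²(ℝ,ρ)} satisfies γ_j = γ_{N+1-j} for all j = 1,…,N. -/

import Mathlib

open Real MeasureTheory Finset Nat

/-- The squared weighted `L²(ℝ,ρ)` approximation error
`‖e^{-·²/(2σ)} - Σ_j γ_j e^{λ_j ·}‖²_{L²(ℝ,ρ)}`. -/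
noncomputable def errE (σ ρ : ℝ) {N : ℕ} (lam : Fin N → ℂ) (γ : Fin N → ℂ) : ℝ :=
  ∫ t : ℝ, ‖(Real.exp (-t ^ 2 / (2 * σ)) : ℂ)
      - ∑ j : Fin N, γ j * Complex.exp (lam j * (t : ℂ))‖ ^ 2 * Real.exp (-t ^ 2 / (2 * ρ))

/-- The trigonometric-sum part. -/
noncomputable def G' {N : ℕ} (lam γ : Fin N → ℂ) (t : ℝ) : ℂ :=
  ∑ j, γ j * Complex.exp (lam j * t)

lemma errE_eq (σ ρ : ℝ) {N : ℕ} (lam γ : Fin N → ℂ) :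
    errE σ ρ lam γ = ∫ t : ℝ,
      ‖(Real.exp (-t ^ 2 / (2 * σ)) : ℂ) - G' lam γ t‖ ^ 2
        * Real.exp (-t ^ 2 / (2 * ρ)) := rfl

lemma contG {N : ℕ} (lam γ : Fin N → ℂ) : Continuous (G' lam γ) := by
  unfold G'
  exact continuous_finset_sum _ fun j _ =>
    continuous_const.mul ((continuous_const.mul Complex.continuous_ofReal).cexp)

lemma Gbound {N : ℕ} (lam γ : Fin N → ℂ) (him : ∀ j, (lam j).re = 0) (t : ℝ) :
    ‖G' lam γ t‖ ≤ ∑ j, ‖γ j‖ := by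
  refine le_trans (norm_sum_le _ _) (Finset.sum_le_sum fun j _ => ?_)
  rw [norm_mul, Complex.norm_exp]
  have : (lam j * (t : ℂ)).re = 0 := by
    simp [Complex.mul_re, him j]
  rw [this, Real.exp_zero, mul_one]

lemma hasDeriv_exp_mul (c : ℂ) : HasDerivAt (fun t : ℝ => Complex.exp (c * t)) c 0 := by
  have h1 : HasDerivAt (fun t : ℝ => (t : ℂ)) 1 0 := by
    simpa using (hasDerivAt_id (0 : ℝ)).ofReal_comp
  have := (h1.const_mul c).cexp
  simpa using this

lemma para (a b c : ℂ) :
    ‖a - b‖ ^ 2 + ‖a - c‖ ^ 2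
      = 2 * ‖a - (b + c) / 2‖ ^ 2 + ‖b - c‖ ^ 2 / 2 := by
  have h := parallelogram_law_with_norm ℝ (a - (b + c) / 2) ((c - b) / 2)
  have e1 : a - (b + c) / 2 + (c - b) / 2 = a - b := by ring
  have e2 : a - (b + c) / 2 - (c - b) / 2 = a - c := by ring
  rw [e1, e2] at h
  have e3 : ‖(c - b) / 2‖ = ‖b - c‖ / 2 := by
    rw [show c - b = -(b - c) by ring, norm_div, norm_neg]
    simp
  rw [e3] at h
  nlinarith [h]

lemma integrable_aux (ρ : ℝ) (hρ : 0 < ρ) (F : ℝ → ℂ) (hF : Continuous F) (C : ℝ)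
    (hC : ∀ t, ‖F t‖ ≤ C) :
    Integrable (fun t : ℝ => ‖F t‖ ^ 2 * Real.exp (-t ^ 2 / (2 * ρ))) := by
  have hg : Integrable (fun t : ℝ => C ^ 2 * Real.exp (-(1 / (2 * ρ)) * t ^ 2)) :=
    (integrable_exp_neg_mul_sq (by positivity)).const_mul _
  refine hg.mono' ?_ ?_
  · exact ((continuous_norm.comp hF).pow 2 |>.mul
      (Real.continuous_exp.comp (((continuous_pow 2).neg).div_const _))).aestronglyMeasurable
  · filter_upwards with t
    have h0 : (0 : ℝ) ≤ ‖F t‖ := norm_nonneg _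
    rw [Real.norm_eq_abs, abs_of_nonneg (by positivity)]
    have he : -t ^ 2 / (2 * ρ) = -(1 / (2 * ρ)) * t ^ 2 := by ring
    rw [he]
    gcongr
    exact hC t

/-- The character `t ↦ e^{ct}` as a monoid homomorphism. -/
noncomputable def expHom (c : ℂ) : Multiplicative ℝ →* ℂ where
  toFun t := Complex.exp (c * (Multiplicative.toAdd t : ℝ))
  map_one' := by simp
  map_mul' x y := by
    simp only [toAdd_mul, Complex.ofReal_add, mul_add, Complex.exp_add]

/-- if the pairwise distinct purely imaginary frequencies satisfy
`λ_j = -λ_{N+1-j}`, then the minimizer satisfies `γ_j = γ_{N+1-j}`. -/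
theorem stmt6 (σ ρ : ℝ) (hσ : 0 < σ) (hρ : 0 < ρ) (N : ℕ) (hN : 1 ≤ N)
    (lam : Fin N → ℂ) (hinj : Function.Injective lam)
    (him : ∀ j, (lam j).re = 0)
    (hsym : ∀ j : Fin N, lam j = -lam (Fin.rev j))
    (γ : Fin N → ℂ)
    (hmin : ∀ γ' : Fin N → ℂ, errE σ ρ lam γ ≤ errE σ ρ lam γ') :
    ∀ j : Fin N, γ j = γ (Fin.rev j) := by
  classical
  set f : ℝ → ℂ := fun t => ((Real.exp (-t ^ 2 / (2 * σ)) : ℝ) : ℂ) with hfdef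
  set δ : Fin N → ℂ := fun j => γ (Fin.rev j) with hδdef
  have hrev : ∀ k : Fin N, lam (Fin.rev k) = -lam k := fun k => by
    have h := hsym k; linear_combination h
  -- G δ t = G γ (-t)
  have hGδ : ∀ t : ℝ, G' lam δ t = G' lam γ (-t) := by
    intro t
    unfold G'
    rw [Fintype.sum_bijective Fin.rev Fin.rev_bijective
      (fun j => δ j * Complex.exp (lam j * t))
      (fun k => γ k * Complex.exp (-lam k * t)) (fun x => by
        simp only [hδdef, Fin.rev_rev, hrev, neg_neg])]
    refine Finset.sum_congr rfl fun k _ => ?_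
    congr 1
    push_cast
    ring_nf
  -- symmetry of the error
  have hEδ : errE σ ρ lam δ = errE σ ρ lam γ := by
    rw [errE_eq, errE_eq]
    have heach : ∀ t : ℝ,
        ‖f t - G' lam δ t‖ ^ 2 * Real.exp (-t ^ 2 / (2 * ρ))
          = ‖f (-t) - G' lam γ (-t)‖ ^ 2 * Real.exp (-(-t) ^ 2 / (2 * ρ)) := by
      intro t
      rw [hGδ t]
      simp [hfdef, neg_sq]
    calc (∫ t : ℝ, ‖f t - G' lam δ t‖ ^ 2 * Real.exp (-t ^ 2 / (2 * ρ)))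
        = ∫ t : ℝ, ‖f (-t) - G' lam γ (-t)‖ ^ 2 * Real.exp (-(-t) ^ 2 / (2 * ρ)) :=
          integral_congr_ae (Filter.Eventually.of_forall heach)
      _ = ∫ t : ℝ, ‖f t - G' lam γ t‖ ^ 2 * Real.exp (-t ^ 2 / (2 * ρ)) :=
          integral_neg_eq_self
            (fun t : ℝ => ‖f t - G' lam γ t‖ ^ 2 * Real.exp (-t ^ 2 / (2 * ρ)))
            volume
  -- the midpoint
  set mid : Fin N → ℂ := fun j => (γ j + δ j) / 2 with hmiddef
  have hGmid : ∀ t : ℝ, G' lam mid t = (G' lam γ t + G' lam δ t) / 2 := by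
    intro t
    unfold G'
    rw [← Finset.sum_add_distrib, Finset.sum_div]
    refine Finset.sum_congr rfl fun j _ => ?_
    show (γ j + δ j) / 2 * _ = _
    ring
  -- continuity and bounds
  have hexpc : ∀ c : ℝ, Continuous (fun t : ℝ => Real.exp (-t ^ 2 / (2 * c))) := fun c =>
    Real.continuous_exp.comp (((continuous_pow 2).neg).div_const _)
  have hfc : Continuous f := Complex.continuous_ofReal.comp (hexpc σ)
  have hfb : ∀ t : ℝ, ‖f t‖ ≤ 1 := by
    intro t
    simp only [hfdef, Complex.norm_real, Real.norm_eq_abs]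
    rw [abs_of_nonneg (Real.exp_nonneg _)]
    apply Real.exp_le_one_iff.mpr
    exact div_nonpos_of_nonpos_of_nonneg (by nlinarith [sq_nonneg t]) (by positivity)
  have hbound : ∀ η : Fin N → ℂ, ∀ t : ℝ,
      ‖f t - G' lam η t‖ ≤ 1 + ∑ j, ‖η j‖ := by
    intro η t
    calc ‖f t - G' lam η t‖
        ≤ ‖f t‖ + ‖G' lam η t‖ := by
          simpa using norm_sub_le (f t) (G' lam η t)
      _ ≤ 1 + ∑ j, ‖η j‖ := add_le_add (hfb t) (Gbound lam η him t)
  have hI : ∀ η : Fin N → ℂ,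
      Integrable (fun t : ℝ =>
        ‖f t - G' lam η t‖ ^ 2 * Real.exp (-t ^ 2 / (2 * ρ))) := fun η =>
    integrable_aux ρ hρ _ (hfc.sub (contG lam η)) _ (hbound η)
  have hID : Integrable (fun t : ℝ =>
      ‖G' lam γ t - G' lam δ t‖ ^ 2 * Real.exp (-t ^ 2 / (2 * ρ))) := by
    refine integrable_aux ρ hρ _ ((contG lam γ).sub (contG lam δ)) 
      ((∑ j, ‖γ j‖) + ∑ j, ‖δ j‖) fun t => ?_
    calc ‖G' lam γ t - G' lam δ t‖
        ≤ ‖G' lam γ t‖ + ‖G' lam δ t‖ := by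
          simpa using norm_sub_le (G' lam γ t) (G' lam δ t)
      _ ≤ _ := add_le_add (Gbound lam γ him t) (Gbound lam δ him t)
  -- the parallelogram identity for the integrals
  have key : errE σ ρ lam γ + errE σ ρ lam δ
      = 2 * errE σ ρ lam mid
        + (1 / 2) * ∫ t : ℝ, ‖G' lam γ t - G' lam δ t‖ ^ 2
            * Real.exp (-t ^ 2 / (2 * ρ)) := by
    rw [errE_eq, errE_eq, errE_eq, ← integral_add (hI γ) (hI δ), ← integral_const_mul,
      ← integral_const_mul, ← integral_add ((hI mid).const_mul 2) (hID.const_mul _)]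
    refine integral_congr_ae (Filter.Eventually.of_forall fun t => ?_)
    have h := para (f t) (G' lam γ t) (G' lam δ t)
    dsimp only
    rw [hGmid t]
    linear_combination Real.exp (-t ^ 2 / (2 * ρ)) * h
  -- conclude the cross term vanishes
  have hDnonneg : ∀ t : ℝ, 0 ≤ ‖G' lam γ t - G' lam δ t‖ ^ 2
      * Real.exp (-t ^ 2 / (2 * ρ)) := fun t => by positivity
  have hDzeroInt : (∫ t : ℝ, ‖G' lam γ t - G' lam δ t‖ ^ 2
      * Real.exp (-t ^ 2 / (2 * ρ))) = 0 := by
    have h1 : 0 ≤ ∫ t : ℝ, ‖G' lam γ t - G' lam δ t‖ ^ 2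
        * Real.exp (-t ^ 2 / (2 * ρ)) := integral_nonneg hDnonneg
    have h2 := hmin mid
    rw [hEδ] at key
    linarith
  have haez : (fun t : ℝ => ‖G' lam γ t - G' lam δ t‖ ^ 2
      * Real.exp (-t ^ 2 / (2 * ρ))) =ᵐ[volume] 0 :=
    (integral_eq_zero_iff_of_nonneg hDnonneg hID).mp hDzeroInt
  have hzero : (fun t : ℝ => ‖G' lam γ t - G' lam δ t‖ ^ 2
      * Real.exp (-t ^ 2 / (2 * ρ))) = 0 := by
    refine (Continuous.ae_eq_iff_eq volume ?_ continuous_const).mp haez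
    exact ((continuous_norm.comp ((contG lam γ).sub (contG lam δ))).pow 2).mul
      (hexpc ρ)
  have hGeq : ∀ t : ℝ, G' lam γ t = G' lam δ t := by
    intro t
    have h : ‖G' lam γ t - G' lam δ t‖ ^ 2 * Real.exp (-t ^ 2 / (2 * ρ)) = 0 := by
      simpa using congrFun hzero t
    have hw : Real.exp (-t ^ 2 / (2 * ρ)) ≠ 0 := (Real.exp_pos _).ne'
    have habs : ‖G' lam γ t - G' lam δ t‖ ^ 2 = 0 :=
      (mul_eq_zero.mp h).resolve_right hw
    have := pow_eq_zero_iff (n := 2) (by norm_num) |>.mp habs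
    exact sub_eq_zero.mp (norm_eq_zero.mp this)
  -- linear independence of characters
  have hhominj : Function.Injective (fun j : Fin N => expHom (lam j)) := by
    intro j k h
    apply hinj
    have hfun : ∀ t : ℝ, Complex.exp (lam j * t) = Complex.exp (lam k * t) := fun t =>
      DFunLike.congr_fun h (Multiplicative.ofAdd t)
    have h1 := hasDeriv_exp_mul (lam j)
    have h2 := hasDeriv_exp_mul (lam k)
    rw [funext hfun] at h1
    exact h1.unique h2
  have li : LinearIndependent ℂ
      (fun j : Fin N => ((expHom (lam j) : Multiplicative ℝ → ℂ))) :=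
    (linearIndependent_monoidHom (Multiplicative ℝ) ℂ).comp _ hhominj
  have hcoef : ∀ j : Fin N, γ j - δ j = 0 := by
    apply Fintype.linearIndependent_iff.mp li (fun j => γ j - δ j)
    funext t
    have h := sub_eq_zero.mpr (hGeq (Multiplicative.toAdd t))
    unfold G' at h
    rw [← Finset.sum_sub_distrib] at h
    simp only [Finset.sum_apply, Pi.smul_apply, smul_eq_mul, Pi.zero_apply, expHom,
      MonoidHom.coe_mk, OneHom.coe_mk]
    rw [← h]
    exact Finset.sum_congr rfl fun j _ => by ring
  intro j
  have := hcoef j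
  simpa [hδdef, sub_eq_zero] using this
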